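/- arXiv:0805.3111 — 7 statements merged into one kernel-verified Lean document; each statement's English description precedes it below -/
import Mathlib

section
/- Let P be an orthogonal projection on ℂ^{2E}, Q = 1 - P, and L a self adjoint endomorphism of ℂ^{2E} with L = QLQ (i.e., L vanishes on ran P). For real k with L + ik invertible, define S(k) = -P - Q(L + ik)^{-1}(L - ik)Q. Then S(k) is unitary for all k ∈ ℝ. -/
open Matrix

/-- The edge S-matrix in the Kuchment projector parametrisation:
S(k) = -P - Q (L + ik)⁻¹ (L - ik) Q with Q = 1 - P. -/
noncomputable def SPL {n : Type*} [Fintype n] [DecidableEq n]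
    (P L : Matrix n n ℂ) (k : ℂ) : Matrix n n ℂ :=
  -P - (1 - P) * (L + (Complex.I * k) • 1)⁻¹ * (L - (Complex.I * k) • 1) * (1 - P)

/-!
`S(k) = -(P + Q U Q)` where `U = (L + ik)⁻¹ (L - ik)` is the Cayley transform of the self-adjoint
`L`, hence unitary. Since `L = QLQ`, the projection `P` commutes with `L` and therefore with `U`;
so `P + Q U Q` acts as the identity on `ran P` and as the unitary `U` on `ran Q`.
-/

theorem Units.inv_mul_star_mem_unitary {R : Type*} [Monoid R] [StarMul R] (u : Rˣ)
    (hu : Commute (u : R) (star (u : R))) : (↑u⁻¹ : R) * star (u : R) ∈ unitary R := by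
  have hcomm : Commute (↑u⁻¹ : R) (star (↑u⁻¹ : R)) := by
    rw [← Units.coe_star_inv]
    rw [← Units.coe_star] at hu
    exact hu.units_inv_left.units_inv_right
  rw [Unitary.mem_iff, star_mul, star_star]
  constructor
  · calc (u : R) * star ↑u⁻¹ * (↑u⁻¹ * star ↑u) = u * (↑u⁻¹ * star ↑u⁻¹) * star ↑u := by
          rw [hcomm.eq]; simp only [mul_assoc]
      _ = star ↑u⁻¹ * star ↑u := by rw [← mul_assoc, u.mul_inv, one_mul]
      _ = 1 := by rw [← star_mul, u.mul_inv, star_one]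
  · calc (↑u⁻¹ : R) * star ↑u * (u * star ↑u⁻¹) = ↑u⁻¹ * (u * star ↑u) * star ↑u⁻¹ := by
          rw [hu.eq]; simp only [mul_assoc]
      _ = star ↑u * star ↑u⁻¹ := by rw [← mul_assoc, u.inv_mul, one_mul]
      _ = 1 := by rw [← star_mul, u.inv_mul, star_one]

theorem IsSelfAdjoint.star_add_I_mul_smul_one {R : Type*} [Ring R] [StarRing R] [Module ℂ R]
    [StarModule ℂ R] {a : R} (ha : IsSelfAdjoint a) (k : ℝ) :
    star (a + (Complex.I * k) • 1) = a - (Complex.I * k) • 1 := by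
  simp [star_add, star_smul, ha.star_eq, sub_eq_add_neg]

theorem IsSelfAdjoint.cayley_mem_unitary {R : Type*} [Ring R] [StarRing R] [Algebra ℂ R]
    [StarModule ℂ R] {a : R} (ha : IsSelfAdjoint a) (k : ℝ) (u : Rˣ)
    (hu : (u : R) = a + (Complex.I * k) • 1) :
    (↑u⁻¹ : R) * (a - (Complex.I * k) • 1) ∈ unitary R := by
  have hc : Commute a ((Complex.I * k) • (1 : R)) := (Commute.one_right a).smul_right _
  rw [← ha.star_add_I_mul_smul_one, ← hu]
  refine u.inv_mul_star_mem_unitary ?_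
  rw [hu, ha.star_add_I_mul_smul_one]
  exact ((Commute.refl a).sub_right hc).add_left (hc.symm.sub_right (Commute.refl _))

theorem Unitary.neg_mem {R : Type*} [Ring R] [StarRing R] {u : R} (hu : u ∈ unitary R) :
    -u ∈ unitary R :=
  (-⟨u, hu⟩ : unitary R).prop

theorem IsIdempotentElem.add_mul_one_sub_mul_add_mul_one_sub {R : Type*} [Ring R] {p a b : R}
    (hp : IsIdempotentElem p) (hb : Commute p b) (hab : a * b = 1) :
    (p + a * (1 - p)) * (p + b * (1 - p)) = 1 := by
  have hqb : Commute (1 - p) b := (Commute.one_left b).sub_left hb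
  calc (p + a * (1 - p)) * (p + b * (1 - p))
        = p * p + p * b * (1 - p) + a * ((1 - p) * p) + a * ((1 - p) * b) * (1 - p) := by
          noncomm_ring
    _ = p + b * (p * (1 - p)) + a * ((1 - p) * p) + a * b * ((1 - p) * (1 - p)) := by
          rw [hp.eq, hb.eq, hqb.eq]; noncomm_ring
    _ = 1 := by
          rw [hp.mul_one_sub_self, hp.one_sub_mul_self, hp.one_sub.eq, hab]; noncomm_ring

theorem IsStarProjection.add_one_sub_mul_mul_one_sub_mem_unitary {R : Type*} [Ring R]
    [StarRing R] {p u : R} (hp : IsStarProjection p) (hu : u ∈ unitary R) (hpu : Commute p u) :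
    p + (1 - p) * u * (1 - p) ∈ unitary R := by
  have hqu : Commute (1 - p) u := (Commute.one_left u).sub_left hpu
  have hpu' : Commute p (star u) := by simpa [hp.isSelfAdjoint.star_eq] using hpu.star_star
  have hqu' : Commute (1 - p) (star u) := (Commute.one_left _).sub_left hpu'
  have hv : p + (1 - p) * u * (1 - p) = p + u * (1 - p) := by
    rw [hqu.eq, mul_assoc, hp.one_sub.isIdempotentElem.eq]
  have hv' : star (p + u * (1 - p)) = p + star u * (1 - p) := by
    rw [star_add, star_mul, hp.isSelfAdjoint.star_eq, hp.one_sub.isSelfAdjoint.star_eq, hqu'.eq]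
  rw [hv, Unitary.mem_iff, hv']
  exact ⟨hp.isIdempotentElem.add_mul_one_sub_mul_add_mul_one_sub hpu
      (Unitary.star_mul_self_of_mem hu),
    hp.isIdempotentElem.add_mul_one_sub_mul_add_mul_one_sub hpu'
      (Unitary.mul_star_self_of_mem hu)⟩

/-- if P is an orthogonal projection, Q = 1 - P, and L is self adjoint
with PL = LP = 0, then for every real k with L + ik invertible the matrix
S(k) = -P - Q(L+ik)⁻¹(L-ik)Q is unitary. -/
theorem stmt_3 (E : ℕ) (P L : Matrix (Fin (2*E)) (Fin (2*E)) ℂ)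
    (hP : P.IsHermitian) (hP2 : P * P = P)
    (hL : L.IsHermitian) (hPL : P * L = 0) (hLP : L * P = 0) :
    ∀ k : ℝ, IsUnit (L + (Complex.I * (k : ℂ)) • 1) →
      SPL P L (k : ℂ) ∈ Matrix.unitaryGroup (Fin (2*E)) ℂ := by
  intro k hk
  have hPL_comm : Commute P L := hPL.trans hLP.symm
  have hPc : Commute P ((Complex.I * (k : ℂ)) • 1) := (Commute.one_right P).smul_right _
  have hPU : Commute P ((↑hk.unit⁻¹ : Matrix _ _ ℂ) * (L - (Complex.I * (k : ℂ)) • 1)) :=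
    (hPL_comm.add_right hPc).units_inv_right.mul_right (hPL_comm.sub_right hPc)
  have hS := IsStarProjection.add_one_sub_mul_mul_one_sub_mem_unitary ⟨hP2, hP⟩
    (hL.isSelfAdjoint.cayley_mem_unitary k hk.unit hk.unit_spec) hPU
  rw [coe_units_inv, hk.unit_spec, ← mul_assoc] at hS
  rw [SPL, ← neg_add']
  exact Unitary.neg_mem hS
end

section
/- With P, Q, L as in the Kuchment parametrisation (P orthogonal projection, Q = 1-P, L self adjoint with PL = LP = 0), define S(k) = -P - Q(L + ik)^{-1}(L - ik)Q for real k ≠ 0. Then S(k) is independent of k if and only if L = 0, in which case S(k) = 1 - 2P. -/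
/-!
Since `PL = LP = 0`, the matrix `M = L + ik` commutes with `P` and `M⁻¹ L` is annihilated by `P`
on both sides, which collapses the definition to `S(k) = 1 - 2P - 2 M⁻¹ L`; `M` is invertible
because the spectrum of the Hermitian `L` is real. If `S(1) = S(2)`, then
`(L + i)⁻¹ L = (L + 2i)⁻¹ L`, and multiplying by `L + i = (L + 2i) - i` gives `(L + 2i)⁻¹ L = 0`.
-/

open Matrix

namespace Matrix

variable {n : Type*} [Fintype n] [DecidableEq n]

theorem IsHermitian.isUnit_det_add_smul_one {L : Matrix n n ℂ} (hL : L.IsHermitian) {c : ℂ}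
    (hc : c.im ≠ 0) : IsUnit (L + c • (1 : Matrix n n ℂ)).det := by
  have hspec : -c ∉ spectrum ℂ L := by
    rw [hL.spectrum_eq_image_range]
    rintro ⟨r, -, hr⟩
    exact hc (by simpa using congrArg Complex.im hr.symm)
  rw [spectrum.notMem_iff, Algebra.algebraMap_eq_smul_one, neg_smul, neg_sub_comm, ← neg_add',
    IsUnit.neg_iff] at hspec
  exact (isUnit_iff_isUnit_det _).mp hspec

theorem commute_nonsing_inv_left {K : Type*} [CommRing K] {M P : Matrix n n K} (hM : IsUnit M.det)
    (h : Commute M P) : Commute M⁻¹ P :=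
  calc M⁻¹ * P = M⁻¹ * (P * M) * M⁻¹ := by
        rw [mul_assoc, mul_assoc, mul_nonsing_inv _ hM, mul_one]
    _ = M⁻¹ * (M * P) * M⁻¹ := by rw [h.eq]
    _ = P * M⁻¹ := by rw [← mul_assoc, nonsing_inv_mul _ hM, one_mul]

theorem eq_zero_of_inv_add_smul_one_mul_eq {K : Type*} [Field K] {L : Matrix n n K} {a b : K}
    (hab : a ≠ b) (ha : IsUnit (L + a • (1 : Matrix n n K)).det)
    (hb : IsUnit (L + b • (1 : Matrix n n K)).det)
    (h : (L + a • 1)⁻¹ * L = (L + b • 1)⁻¹ * L) : L = 0 := by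
  set B := L + b • (1 : Matrix n n K)
  have hL : L = (L + a • 1) * (B⁻¹ * L) := by
    rw [← h, ← mul_assoc, mul_nonsing_inv _ ha, one_mul]
  have hshift : (L + a • 1) * (B⁻¹ * L) = L + (a - b) • (B⁻¹ * L) := by
    rw [show L + a • (1 : Matrix n n K) = B + (a - b) • 1 by module, add_mul, ← mul_assoc,
      mul_nonsing_inv _ hb, one_mul, Matrix.smul_mul, one_mul]
  have hBL : B⁻¹ * L = 0 := by
    have : (a - b) • (B⁻¹ * L) = 0 := by
      simpa using hL.trans hshift
    exact (smul_eq_zero.mp this).resolve_left (sub_ne_zero.mpr hab)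
  rw [← one_mul L, ← mul_nonsing_inv _ hb, mul_assoc, hBL, mul_zero]

end Matrix

theorem SPL_eq_one_sub_two_smul_sub {n : Type*} [Fintype n] [DecidableEq n] {P L : Matrix n n ℂ}
    (hP2 : P * P = P) (hPL : P * L = 0) (hLP : L * P = 0) {k : ℂ}
    (hk : IsUnit (L + (Complex.I * k) • (1 : Matrix n n ℂ)).det) :
    SPL P L k = 1 - 2 • P - (2 : ℂ) • ((L + (Complex.I * k) • 1)⁻¹ * L) := by
  set M := L + (Complex.I * k) • (1 : Matrix n n ℂ) with hM
  have hMP : Commute M P := by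
    simp only [hM, Commute, SemiconjBy, add_mul, mul_add, hLP, hPL, Matrix.smul_mul,
      Matrix.mul_smul, one_mul, mul_one]
  have hXP : M⁻¹ * L * P = 0 := by rw [mul_assoc, hLP, mul_zero]
  have hPX : P * (M⁻¹ * L) = 0 := by
    rw [← mul_assoc, ← (commute_nonsing_inv_left hk hMP).eq, mul_assoc, hPL, mul_zero]
  have hsub : M⁻¹ * (L - (Complex.I * k) • 1) = (2 : ℂ) • (M⁻¹ * L) - 1 := by
    rw [show L - (Complex.I * k) • 1 = (2 : ℂ) • L - M by rw [hM]; module, mul_sub,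
      nonsing_inv_mul _ hk, Matrix.mul_smul]
  rw [SPL, ← hM, mul_assoc (1 - P), hsub]
  simp only [mul_sub, sub_mul, mul_one, one_mul, Matrix.smul_mul, Matrix.mul_smul,
    hXP, hPX, hP2, smul_zero, zero_mul]
  abel

theorem stmt_4_general (E : ℕ) (P L : Matrix (Fin (2*E)) (Fin (2*E)) ℂ)
    (hP2 : P * P = P)
    (hL : L.IsHermitian) (hPL : P * L = 0) (hLP : L * P = 0) :
    ((∀ k₁ k₂ : ℝ, k₁ ≠ 0 → k₂ ≠ 0 → SPL P L (k₁ : ℂ) = SPL P L (k₂ : ℂ)) ↔ L = 0) ∧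
    (L = 0 → ∀ k : ℝ, k ≠ 0 → SPL P L (k : ℂ) = 1 - 2 • P) := by
  have hunit : ∀ k : ℝ, k ≠ 0 → IsUnit (L + (Complex.I * k) • 1).det := fun k hk =>
    hL.isUnit_det_add_smul_one (by simpa using hk)
  have hS : ∀ k : ℝ, k ≠ 0 →
      SPL P L k = 1 - 2 • P - (2 : ℂ) • ((L + (Complex.I * k) • 1)⁻¹ * L) :=
    fun k hk => SPL_eq_one_sub_two_smul_sub hP2 hPL hLP (hunit k hk)
  have hzero : L = 0 → ∀ k : ℝ, k ≠ 0 → SPL P L k = 1 - 2 • P := by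
    rintro rfl k hk
    simp [hS k hk]
  refine ⟨⟨fun hconst => ?_, fun h0 k₁ k₂ hk₁ hk₂ => by rw [hzero h0 k₁ hk₁, hzero h0 k₂ hk₂]⟩,
    hzero⟩
  have h12 := hconst 1 2 one_ne_zero two_ne_zero
  rw [hS 1 one_ne_zero, hS 2 two_ne_zero] at h12
  refine eq_zero_of_inv_add_smul_one_mul_eq ?_ (hunit 1 one_ne_zero) (hunit 2 two_ne_zero)
    (smul_right_injective _ two_ne_zero (sub_right_injective h12))
  simp

/-- with P an orthogonal projection, Q = 1-P and L self adjoint with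
PL = LP = 0, the S-matrix S(k) is independent of k (for real k ≠ 0) iff L = 0,
in which case S(k) = 1 - 2P. -/
theorem stmt_4 (E : ℕ) (P L : Matrix (Fin (2*E)) (Fin (2*E)) ℂ)
    (hP : P.IsHermitian) (hP2 : P * P = P)
    (hL : L.IsHermitian) (hPL : P * L = 0) (hLP : L * P = 0) :
    ((∀ k₁ k₂ : ℝ, k₁ ≠ 0 → k₂ ≠ 0 → SPL P L (k₁ : ℂ) = SPL P L (k₂ : ℂ)) ↔ L = 0) ∧
    (L = 0 → ∀ k : ℝ, k ≠ 0 → SPL P L (k : ℂ) = 1 - 2 • P) :=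
  stmt_4_general E P L hP2 hL hPL hLP
end

section
/- Let L be a self adjoint endomorphism of ℂ^{2E} with P L = L P = 0 for an orthogonal projection P, Q = 1 - P, and let λ_max = max{|λ| : λ ∈ σ(L)\{0}} (assuming L ≠ 0). Then for every complex k with |k| > λ_max, the series 1 - 2P + 2 Σ_{n≥1} (iL)^n / k^n converges absolutely and equals S(k) = -P - Q(L + ik)^{-1}(L - ik)Q. -/
open Matrix
open scoped Matrix.Norms.L2Operator

/-! With `B = (L + ik)⁻¹`, the relations `PL = LP = 0` make `B` act as `(ik)⁻¹` on the range
of `P`, so `Q B (L - ik) Q = Q (1 - 2ik B) Q = Q - 2(ik B - P)` and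
`S(k) - (1 - 2P) = 2(ik B - 1) = 2((1 - iL/k)⁻¹ - 1)`.
The right-hand side is twice the tail `Σ_{n ≥ 1} (iL/k)ⁿ` of a Neumann series, which converges
absolutely because `‖L‖ ≤ λ_max < |k|` for the self-adjoint `L`. -/

theorem IsSelfAdjoint.norm_le_of_forall_mem_spectrum {A : Type*} [CStarAlgebra A]
    [Nontrivial A] {a : A} (ha : IsSelfAdjoint a) {r : ℝ}
    (h : ∀ μ ∈ spectrum ℂ a, ‖μ‖ ≤ r) : ‖a‖ ≤ r := by
  obtain ⟨μ, hμ, hμa⟩ := spectrum.exists_nnnorm_eq_spectralRadius a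
  rw [ha.spectralRadius_eq_nnnorm, ENNReal.coe_inj] at hμa
  rw [← coe_nnnorm, ← hμa, coe_nnnorm]
  exact h μ hμ

theorem hasSum_pow_succ_of_norm_lt_one {R : Type*} [NormedRing R] [HasSummableGeomSeries R]
    {x : R} (h : ‖x‖ < 1) : HasSum (fun n ↦ x ^ (n + 1)) (Ring.inverse (1 - x) - 1) := by
  simpa using (hasSum_nat_add_iff' 1).mpr (hasSum_geom_series_inverse x h)

theorem Ring.inverse_smul {K R : Type*} [Field K] [Ring R] [Algebra K R] {c : K} (hc : c ≠ 0)
    (y : R) : Ring.inverse (c • y) = c⁻¹ • Ring.inverse y := by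
  have hu : IsUnit (algebraMap K R c) := (isUnit_iff_ne_zero.mpr hc).map _
  have hinv : Ring.inverse (algebraMap K R c) = algebraMap K R c⁻¹ := by
    rw [← one_mul (Ring.inverse _), eq_comm, Ring.eq_mul_inverse_iff_mul_eq _ _ _ hu, ← map_mul,
      inv_mul_cancel₀ hc, map_one]
  rw [Algebra.smul_def, Ring.inverse_mul (Or.inl hu), hinv, Algebra.smul_def, Algebra.commutes]

theorem inv_I_mul_smul_add_smul_one {R : Type*} [Ring R] [Algebra ℂ R] (a : R) {k : ℂ}
    (hk : k ≠ 0) :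
    (Complex.I * k)⁻¹ • (a + (Complex.I * k) • 1) = 1 - (Complex.I / k) • a := by
  rw [smul_add, smul_smul, inv_mul_cancel₀ (mul_ne_zero Complex.I_ne_zero hk), one_smul, mul_inv,
    Complex.inv_I, neg_mul, neg_smul, ← div_eq_mul_inv]
  abel

theorem neg_sub_mul_resolvent_mul_sub {K R : Type*} [CommRing K] [Ring R] [Algebra K R]
    {P L B : R} {c : K} (hP2 : P * P = P) (hPL : P * L = 0) (hLP : L * P = 0)
    (hBA : B * (L + c • 1) = 1) (hAB : (L + c • 1) * B = 1) :
    -P - (1 - P) * B * (L - c • 1) * (1 - P) - (1 - 2 • P) = 2 • (c • B - 1) := by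
  have hPB : P * (c • B) = P := by
    have hPA : P * (L + c • 1) = c • P := by rw [mul_add, hPL, zero_add, mul_smul_one]
    rw [mul_smul_comm, ← smul_mul_assoc, ← hPA, mul_assoc, hAB, mul_one]
  have hBP : c • B * P = P := by
    have hAP : (L + c • 1) * P = c • P := by rw [add_mul, hLP, zero_add, smul_one_mul]
    rw [smul_mul_assoc, ← mul_smul_comm, ← hAP, ← mul_assoc, hBA, one_mul]
  have hBL : B * (L - c • 1) = 1 - 2 • (c • B) := by
    have hBL' : B * L = 1 - c • B := by rw [← hBA, mul_add, mul_smul_one, add_sub_cancel_right]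
    rw [mul_sub, mul_smul_one, hBL', two_nsmul]
    abel
  rw [mul_assoc _ B, hBL]
  set B' := c • B
  simp only [mul_sub, sub_mul, mul_one, one_mul, mul_smul_comm, smul_mul_assoc, hPB, hBP, hP2]
  abel

theorem stmt_7_general (E : ℕ) (P L : Matrix (Fin (2*E)) (Fin (2*E)) ℂ)
    (hP2 : P * P = P)
    (hL : L.IsHermitian) (hPL : P * L = 0) (hLP : L * P = 0) (hL0 : L ≠ 0)
    (lmax : ℝ) (hspec : ∀ μ : ℂ, μ ∈ spectrum ℂ L → ‖μ‖ ≤ lmax) :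
    ∀ k : ℂ, lmax < ‖k‖ →
      Summable (fun n : ℕ => ‖(2 / k^(n+1)) • (Complex.I • L)^(n+1)‖) ∧
      HasSum (fun n : ℕ => (2 / k^(n+1)) • (Complex.I • L)^(n+1))
        (SPL P L k - (1 - 2 • P)) := by
  intro k hk
  have := nontrivial_of_ne L 0 hL0
  have hLk : ‖L‖ < ‖k‖ :=
    (hL.isSelfAdjoint.norm_le_of_forall_mem_spectrum hspec).trans_lt hk
  have hk0 : k ≠ 0 := norm_pos_iff.mp ((norm_nonneg L).trans_lt hLk)
  set x := (Complex.I / k) • L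
  have hx : ‖x‖ < 1 := by
    rwa [norm_smul, norm_div, Complex.norm_I, one_div_mul_eq_div,
      div_lt_one (norm_pos_iff.mpr hk0)]
  have hterm (n : ℕ) :
      (2 / k ^ (n + 1)) • (Complex.I • L) ^ (n + 1) = (2 : ℂ) • x ^ (n + 1) := by
    rw [smul_pow, smul_pow, smul_smul, smul_smul, div_pow]
    ring_nf
  have hc : (Complex.I * k)⁻¹ ≠ 0 := inv_ne_zero (mul_ne_zero Complex.I_ne_zero hk0)
  have hA : IsUnit (L + (Complex.I * k) • 1) := by
    rw [← isUnit_smul_iff (Units.mk0 _ hc), Units.smul_mk0, inv_I_mul_smul_add_smul_one L hk0]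
    exact isUnit_one_sub_of_norm_lt_one hx
  have hinv :
      Ring.inverse (1 - x) = (Complex.I * k) • Ring.inverse (L + (Complex.I * k) • 1) := by
    rw [← inv_I_mul_smul_add_smul_one L hk0, Ring.inverse_smul hc, inv_inv]
  simp_rw [hterm, norm_smul]
  refine ⟨((summable_nat_add_iff 1).mpr (summable_norm_geometric_of_norm_lt_one hx)).mul_left _,
    ?_⟩
  rw [SPL, nonsing_inv_eq_ringInverse, neg_sub_mul_resolvent_mul_sub hP2 hPL hLP
    (Ring.inverse_mul_cancel _ hA) (Ring.mul_inverse_cancel _ hA), ← ofNat_smul_eq_nsmul ℂ,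
    ← hinv]
  exact (hasSum_pow_succ_of_norm_lt_one hx).const_smul _

/-- for |k| > λ_max (λ_max bounding the moduli of the eigenvalues of L),
the series 1 - 2P + 2 Σ_{n≥1} (iL)ⁿ/kⁿ converges absolutely and equals S(k). -/
theorem stmt_7 (E : ℕ) (P L : Matrix (Fin (2*E)) (Fin (2*E)) ℂ)
    (hP : P.IsHermitian) (hP2 : P * P = P)
    (hL : L.IsHermitian) (hPL : P * L = 0) (hLP : L * P = 0) (hL0 : L ≠ 0)
    (lmax : ℝ) (hspec : ∀ μ : ℂ, μ ∈ spectrum ℂ L → ‖μ‖ ≤ lmax) :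
    ∀ k : ℂ, lmax < ‖k‖ →
      Summable (fun n : ℕ => ‖(2 / k^(n+1)) • (Complex.I • L)^(n+1)‖) ∧
      HasSum (fun n : ℕ => (2 / k^(n+1)) • (Complex.I • L)^(n+1))
        (SPL P L k - (1 - 2 • P)) :=
  stmt_7_general E P L hP2 hL hPL hLP hL0 lmax hspec
end

section
/- Let U(k) = S(k) T(k) where S(k) is the edge S-matrix and T(k) is the 2E×2E block matrix with off-diagonal blocks diag(e^{ikl_1},…,e^{ikl_E}) and zero diagonal blocks. Define F(k) = det(1 - U(k)). Then for all k where both sides are defined, F(k) = (-1)^M e^{2ikℒ} (∏_{α=1}^d (λ_α - ik)/(λ_α + ik)) F(-k), where ℒ = l_1 + … + l_E, λ_1,…,λ_d are the nonzero eigenvalues of L counted with multiplicity, and M = E + d + dim ker B. -/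
open Matrix

/-- The metric matrix T(𝒍;k) with off-diagonal blocks diag(e^{ikl_j}). -/
noncomputable def Tmat {E : ℕ} (l : Fin E → ℝ) (k : ℂ) :
    Matrix (Fin E ⊕ Fin E) (Fin E ⊕ Fin E) ℂ :=
  Matrix.fromBlocks 0 (Matrix.diagonal fun j => Complex.exp (Complex.I * k * (l j)))
    (Matrix.diagonal fun j => Complex.exp (Complex.I * k * (l j))) 0

lemma detT_aux (E : ℕ) (l : Fin E → ℝ) (k : ℂ) :
    Matrix.det (Tmat l k) = (-1)^E * Complex.exp (2 * Complex.I * k * (∑ j, (l j : ℂ))) := by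
  set P : Matrix (Fin E ⊕ Fin E) (Fin E ⊕ Fin E) ℂ := Matrix.fromBlocks 0 1 (-1) 0 with hPdef
  have h : Tmat l k = P * Matrix.fromBlocks
      (-(Matrix.diagonal fun j => Complex.exp (Complex.I * k * (l j)))) 0 0
      (Matrix.diagonal fun j => Complex.exp (Complex.I * k * (l j))) := by
    rw [hPdef, Matrix.fromBlocks_multiply]; simp [Tmat]
  have hP : Matrix.det P = 1 := by
    have h2 : P = (Matrix.fromBlocks 1 1 0 1 : Matrix (Fin E ⊕ Fin E) (Fin E ⊕ Fin E) ℂ) *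
        ((Matrix.fromBlocks 1 0 (-1) 1 : Matrix (Fin E ⊕ Fin E) (Fin E ⊕ Fin E) ℂ) *
         (Matrix.fromBlocks 1 1 0 1 : Matrix (Fin E ⊕ Fin E) (Fin E ⊕ Fin E) ℂ)) := by
      rw [hPdef]; simp [Matrix.fromBlocks_multiply]
    rw [h2, Matrix.det_mul, Matrix.det_mul, Matrix.det_fromBlocks_zero₂₁,
      Matrix.det_fromBlocks_zero₁₂]
    simp only [Matrix.det_one]
    norm_num
  rw [h, Matrix.det_mul, hP, one_mul, Matrix.det_fromBlocks_zero₂₁, Matrix.det_neg,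
    Matrix.det_diagonal, Fintype.card_fin, mul_assoc,
    ← Finset.prod_mul_distrib]
  simp only [← Complex.exp_add]
  rw [← Complex.exp_sum]
  congr 2
  rw [Finset.mul_sum]
  exact Finset.sum_congr rfl fun j _ => by ring

lemma TT_aux (E : ℕ) (l : Fin E → ℝ) (k : ℂ) : Tmat l k * Tmat l (-k) = 1 := by
  rw [Tmat, Tmat, Matrix.fromBlocks_multiply]
  simp only [Matrix.diagonal_mul_diagonal, ← Complex.exp_add, Matrix.mul_zero,
    Matrix.zero_mul, add_zero, zero_add]
  rw [← Matrix.fromBlocks_one]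
  congr 1
  all_goals
    rw [← Matrix.diagonal_one]
    congr 1
    funext j
    rw [← Complex.exp_zero]
    ring_nf

/-- functional equation for F(k) = det(1 - S(k)T(k)).  Here S(k) is
given through its unitary diagonalisation (representation (5a)): the eigenvalues
are -(λ_α - ik)/(λ_α + ik) for the d nonzero eigenvalues λ_α of L (with
multiplicity), +1 with multiplicity r and -1 with multiplicity s = dim ker B.
Then F(k) = (-1)^{E+d+s} e^{2ikℒ} ∏_α (λ_α - ik)/(λ_α + ik) F(-k). -/
theorem stmt_12 (E d r s : ℕ) (l : Fin E → ℝ) (lam : Fin d → ℝ)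
    (hlam : ∀ α, lam α ≠ 0)
    (W : Matrix (Fin E ⊕ Fin E) (Fin E ⊕ Fin E) ℂ)
    (hW : W ∈ Matrix.unitaryGroup (Fin E ⊕ Fin E) ℂ)
    (e : (Fin E ⊕ Fin E) ≃ (Fin d ⊕ (Fin r ⊕ Fin s)))
    (S : ℂ → Matrix (Fin E ⊕ Fin E) (Fin E ⊕ Fin E) ℂ)
    (hS : ∀ k : ℂ, S k = Wᴴ * Matrix.diagonal (fun i =>
      Sum.elim
        (fun α : Fin d => -(((lam α : ℂ) - Complex.I * k) / ((lam α : ℂ) + Complex.I * k)))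
        (Sum.elim (fun _ : Fin r => (1 : ℂ)) (fun _ : Fin s => (-1 : ℂ)))
        (e i)) * W)
    (k : ℂ)
    (hk : ∀ α, (lam α : ℂ) + Complex.I * k ≠ 0 ∧ (lam α : ℂ) - Complex.I * k ≠ 0) :
    Matrix.det (1 - S k * Tmat l k) =
      (-1)^(E + d + s) * Complex.exp (2 * Complex.I * k * (∑ j, (l j : ℂ))) *
        (∏ α, ((lam α : ℂ) - Complex.I * k) / ((lam α : ℂ) + Complex.I * k)) *
        Matrix.det (1 - S (-k) * Tmat l (-k)) := by
  have hW1 : W * Wᴴ = 1 := by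
    have := (Matrix.mem_unitaryGroup_iff.mp hW)
    simpa [Matrix.star_eq_conjTranspose] using this
  have hW2 : Wᴴ * W = 1 := by
    have := (Matrix.mem_unitaryGroup_iff'.mp hW)
    simpa [Matrix.star_eq_conjTranspose] using this
  have hmid : ∀ (D1 D2 : Matrix (Fin E ⊕ Fin E) (Fin E ⊕ Fin E) ℂ),
      Wᴴ * D1 * W * (Wᴴ * D2 * W) = Wᴴ * (D1 * D2) * W := by
    intro D1 D2
    have hw : W * (Wᴴ * D2 * W) = D2 * W := by
      rw [← Matrix.mul_assoc, ← Matrix.mul_assoc, hW1, Matrix.one_mul]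
    rw [Matrix.mul_assoc (Wᴴ * D1) W _, hw]
    simp only [Matrix.mul_assoc]
  have main : ∀ (g1 g2 : (Fin E ⊕ Fin E) → ℂ), (∀ i, g1 i * g2 i = 1) →
      Wᴴ * Matrix.diagonal g1 * W * (Wᴴ * Matrix.diagonal g2 * W) = 1 := by
    intro g1 g2 hg
    rw [hmid, Matrix.diagonal_mul_diagonal,
      show (fun i => g1 i * g2 i) = fun _ => (1 : ℂ) from funext hg,
      Matrix.diagonal_one, Matrix.mul_one, hW2]
  -- S(k) S(-k) = 1
  have hSS : S k * S (-k) = 1 := by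
    rw [hS k, hS (-k)]
    refine main _ _ fun i => ?_
    rcases h : e i with α | β | γ
    · simp only [Sum.elim_inl]
      rw [neg_mul_neg, div_mul_div_comm]
      rw [show ((lam α : ℂ) - Complex.I * k) * ((lam α : ℂ) - Complex.I * (-k)) =
        ((lam α : ℂ) + Complex.I * k) * ((lam α : ℂ) + Complex.I * (-k)) by ring]
      refine div_self (mul_ne_zero (hk α).1 ?_)
      rw [show ((lam α : ℂ) + Complex.I * (-k)) = ((lam α : ℂ) - Complex.I * k) by ring]
      exact (hk α).2
    · simp
    · simp
  -- T(-k) T(k) = 1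
  have hTT : Tmat l (-k) * Tmat l k = 1 := by
    simpa using TT_aux E l (-k)
  -- key algebraic identity
  have key : 1 - S k * Tmat l k = (-(S k)) * (1 - S (-k) * Tmat l (-k)) * Tmat l k := by
    have expand : (-(S k)) * (1 - S (-k) * Tmat l (-k)) * Tmat l k
        = -(S k * Tmat l k) + (S k * S (-k)) * (Tmat l (-k) * Tmat l k) := by
      noncomm_ring
    rw [expand, hSS, hTT, one_mul]
    noncomm_ring
  -- determinant of S(k)
  have detS : Matrix.det (S k) = (-1 : ℂ)^(d + s) *
      ∏ α, ((lam α : ℂ) - Complex.I * k) / ((lam α : ℂ) + Complex.I * k) := by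
    rw [hS k, Matrix.det_mul, Matrix.det_mul, Matrix.det_diagonal]
    have hww : Matrix.det Wᴴ * Matrix.det W = 1 := by
      rw [← Matrix.det_mul, hW2, Matrix.det_one]
    rw [mul_right_comm, hww, one_mul]
    rw [Equiv.prod_comp e (Sum.elim
        (fun α : Fin d => -(((lam α : ℂ) - Complex.I * k) / ((lam α : ℂ) + Complex.I * k)))
        (Sum.elim (fun _ : Fin r => (1 : ℂ)) (fun _ : Fin s => (-1 : ℂ))))]
    rw [Fintype.prod_sum_type]
    simp only [Sum.elim_inl, Sum.elim_inr]
    rw [Fintype.prod_sum_type]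
    simp only [Sum.elim_inl, Sum.elim_inr, Finset.prod_const_one, one_mul,
      Finset.prod_const, Finset.card_univ, Fintype.card_fin]
    have : ∏ α : Fin d, -(((lam α : ℂ) - Complex.I * k) / ((lam α : ℂ) + Complex.I * k))
        = (-1 : ℂ)^d * ∏ α, ((lam α : ℂ) - Complex.I * k) / ((lam α : ℂ) + Complex.I * k) := by
      rw [show (fun α : Fin d => -(((lam α : ℂ) - Complex.I * k) / ((lam α : ℂ) + Complex.I * k)))
          = fun α => (-1 : ℂ) * (((lam α : ℂ) - Complex.I * k) / ((lam α : ℂ) + Complex.I * k))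
          from funext fun α => (neg_one_mul _).symm,
        Finset.prod_mul_distrib, Finset.prod_const, Finset.card_univ, Fintype.card_fin]
    rw [this]
    ring
  -- assemble
  rw [key, Matrix.det_mul, Matrix.det_mul, Matrix.det_neg, Fintype.card_sum, Fintype.card_fin,
    Even.neg_one_pow ⟨E, rfl⟩, one_mul, detS, detT_aux]
  ring
end

section
/- Under the hypotheses of the eigenphase-derivative formula, the derivative θ'(k) satisfies l_min - 2/λ⁺_min ≤ θ'(k) ≤ l_max + 2/λ⁻_min, where l_min, l_max are the smallest and largest edge lengths, λ⁺_min = min{λ ∈ σ(L) : λ > 0} (∞ if none), and λ⁻_min = min{|λ| : λ ∈ σ(L), λ < 0} (∞ if none). In particular, if l_min > 2/λ⁺_min then θ'(k) > 0 for all k. -/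
/-!
Diagonalising `L = U D U*` turns `L (L² + k²)⁻¹` into `U diag(μ / (μ² + k²)) U*`, so the
quadratic form `⟨v, L (L² + k²)⁻¹ v⟩` is an average of the values `μ / (μ² + k²)` over the
eigenvalues `μ` of `L`, weighted by `|(U* v)ᵢ|²`, which sum to `‖v‖² = 1`. On the spectrum,
`μ / (μ² + k²) ≤ 1 / μ ≤ 1 / λ⁺_min` for `μ > 0` and `≥ -1 / λ⁻_min` for `μ < 0`, and
`Σ lᵢ |vᵢ|²` is likewise an average of the edge lengths.
-/

open Matrix Unitary Set

theorem div_sq_add_mem_Icc {x c lp lm : ℝ} (hc : 0 ≤ c) (hlp : 0 < lp) (hlm : 0 < lm)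
    (hp : 0 < x → lp ≤ x) (hm : x < 0 → lm ≤ -x) : x / (x ^ 2 + c) ∈ Icc (-lm⁻¹) lp⁻¹ := by
  rcases lt_trichotomy x 0 with hx | rfl | hx
  · have hden : 0 < x ^ 2 + c := by nlinarith [sq_pos_of_neg hx]
    constructor
    · rw [neg_le, ← neg_div, div_le_iff₀ hden, inv_mul_eq_div, le_div_iff₀ hlm]
      nlinarith [hm hx]
    · exact (div_neg_of_neg_of_pos hx hden).le.trans (inv_pos.2 hlp).le
  · simp [hlm.le, hlp.le]
  · have hden : 0 < x ^ 2 + c := by positivity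
    constructor
    · exact (neg_nonpos.2 (inv_pos.2 hlm).le).trans (div_pos hx hden).le
    · rw [div_le_iff₀ hden, inv_mul_eq_div, le_div_iff₀ hlp]
      nlinarith [hp hx]

theorem sum_mul_mem_Icc_of_sum_eq_one {ι : Type*} [Fintype ι] {p d : ι → ℝ} {a b : ℝ}
    (hp : ∀ i, 0 ≤ p i) (hp1 : ∑ i, p i = 1) (hd : ∀ i, d i ∈ Icc a b) :
    ∑ i, d i * p i ∈ Icc a b := by
  constructor
  · calc a = ∑ i, a * p i := by rw [← Finset.mul_sum, hp1, mul_one]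
      _ ≤ ∑ i, d i * p i := by gcongr with i; exacts [hp i, (hd i).1]
  · calc ∑ i, d i * p i ≤ ∑ i, b * p i := by gcongr with i; exacts [hp i, (hd i).2]
      _ = b := by rw [← Finset.mul_sum, hp1, mul_one]

variable {n : Type*} [Fintype n]

namespace Matrix

theorem star_dotProduct_self_eq_sum_normSq (v : n → ℂ) :
    star v ⬝ᵥ v = ((∑ i, Complex.normSq (v i) : ℝ) : ℂ) := by
  simp only [dotProduct, Pi.star_apply, Complex.ofReal_sum, Complex.star_def,
    Complex.normSq_eq_conj_mul_self]

variable [DecidableEq n]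

theorem conjStarAlgAut_inv {R : Type*} [CommRing R] [StarRing R] (U : unitaryGroup n R)
    (A : Matrix n n R) : (conjStarAlgAut R _ U A)⁻¹ = conjStarAlgAut R _ U A⁻¹ := by
  have hinv : (U : Matrix n n R)⁻¹ = star U := inv_eq_left_inv (coe_star_mul_self U)
  have hinv_star : (star U : Matrix n n R)⁻¹ = U := inv_eq_left_inv (coe_mul_star_self U)
  rw [conjStarAlgAut_apply, conjStarAlgAut_apply, mul_inv_rev, mul_inv_rev, hinv, hinv_star,
    Matrix.mul_assoc, coe_star]

theorem inv_diagonal_of_ne_zero {K : Type*} [Field K] {d : n → K} (hd : ∀ i, d i ≠ 0) :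
    (diagonal d)⁻¹ = diagonal d⁻¹ :=
  inv_eq_right_inv <| by simp [diagonal_mul_diagonal, hd]

theorem star_dotProduct_conjStarAlgAut_diagonal_mulVec (U : unitaryGroup n ℂ) (d : n → ℝ)
    (v : n → ℂ) :
    star v ⬝ᵥ (conjStarAlgAut ℂ _ U (diagonal fun i ↦ (d i : ℂ)) *ᵥ v) =
      ((∑ i, d i * Complex.normSq (((star U : Matrix n n ℂ) *ᵥ v) i) : ℝ) : ℂ) := by
  have hw : star ((star U : Matrix n n ℂ) *ᵥ v) = star v ᵥ* U := by
    rw [star_mulVec, star_eq_conjTranspose, conjTranspose_conjTranspose]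
  rw [conjStarAlgAut_apply, ← mulVec_mulVec, ← mulVec_mulVec, dotProduct_mulVec, ← hw]
  simp only [dotProduct, mulVec_diagonal, Pi.star_apply, Complex.ofReal_sum, Complex.ofReal_mul,
    Complex.star_def, Complex.normSq_eq_conj_mul_self, mul_left_comm (starRingEnd ℂ _)]

theorem sum_normSq_star_unitary_mulVec (U : unitaryGroup n ℂ) (v : n → ℂ) :
    ∑ i, Complex.normSq (((star U : Matrix n n ℂ) *ᵥ v) i) = ∑ i, Complex.normSq (v i) := by
  have h := star_dotProduct_conjStarAlgAut_diagonal_mulVec U 1 v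
  simp only [Pi.one_apply, Complex.ofReal_one, one_mul, diagonal_one, map_one, one_mulVec,
    star_dotProduct_self_eq_sum_normSq] at h
  exact_mod_cast h.symm

theorem IsHermitian.mul_inv_sq_add_smul_one {A : Matrix n n ℂ} (hA : A.IsHermitian) {c : ℝ}
    (hc : 0 < c) :
    A * (A ^ 2 + (c : ℂ) • 1)⁻¹ = conjStarAlgAut ℂ _ hA.eigenvectorUnitary
      (diagonal fun i ↦ ((hA.eigenvalues i / (hA.eigenvalues i ^ 2 + c) : ℝ) : ℂ)) := by
  have hden : ∀ i, ((hA.eigenvalues i : ℂ) ^ 2 + c) ≠ 0 := fun i ↦ by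
    exact_mod_cast (by positivity : 0 < hA.eigenvalues i ^ 2 + c).ne'
  conv_lhs => rw [hA.spectral_theorem]
  rw [← map_pow, ← map_one (conjStarAlgAut ℂ _ hA.eigenvectorUnitary), ← map_smul, ← map_add,
    conjStarAlgAut_inv, ← map_mul, diagonal_pow, smul_one_eq_diagonal, diagonal_add,
    inv_diagonal_of_ne_zero (by simpa using hden), diagonal_mul_diagonal]
  congr 2
  ext i
  push_cast
  simp [div_eq_mul_inv]

end Matrix

/-- bounds on the eigenphase derivative
θ'(k) = Σᵢ lᵢ|vᵢ|² - 2⟨v, (L/(L²+k²))v⟩: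
l_min - 2/λ⁺_min ≤ θ'(k) ≤ l_max + 2/λ⁻_min, and θ'(k) > 0 if l_min > 2/λ⁺_min. -/
theorem stmt_14 (E : ℕ)
    (L : Matrix (Fin E ⊕ Fin E) (Fin E ⊕ Fin E) ℂ) (hL : L.IsHermitian)
    (ld : Fin E → ℝ) (lmin lmax : ℝ)
    (hmin : ∀ j, lmin ≤ ld j) (hmax : ∀ j, ld j ≤ lmax)
    (lp lm : ℝ) (hlp : 0 < lp) (hlm : 0 < lm)
    (hp : ∀ μ : ℝ, (μ : ℂ) ∈ spectrum ℂ L → 0 < μ → lp ≤ μ)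
    (hm : ∀ μ : ℝ, (μ : ℂ) ∈ spectrum ℂ L → μ < 0 → lm ≤ -μ)
    (k : ℝ) (hk : k ≠ 0)
    (v : (Fin E ⊕ Fin E) → ℂ) (hv : ∑ i, Complex.normSq (v i) = 1)
    (θ' : ℝ)
    (hθ' : (θ' : ℂ) = (∑ i, ((Sum.elim ld ld i : ℝ) : ℂ) * (Complex.normSq (v i) : ℂ))
      - 2 * (star v ⬝ᵥ ((L * (L^2 + ((k : ℂ)^2) • 1)⁻¹) *ᵥ v))) :
    (lmin - 2 / lp ≤ θ' ∧ θ' ≤ lmax + 2 / lm) ∧ (2 / lp < lmin → 0 < θ') := by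
  have hk2 : 0 < k ^ 2 := by positivity
  set U := hL.eigenvectorUnitary
  set f : Fin E ⊕ Fin E → ℝ := fun i ↦ hL.eigenvalues i / (hL.eigenvalues i ^ 2 + k ^ 2)
  set p : Fin E ⊕ Fin E → ℝ := fun i ↦ Complex.normSq (((star U : Matrix _ _ ℂ) *ᵥ v) i)
  have hθ : θ' = ∑ i, Sum.elim ld ld i * Complex.normSq (v i) - 2 * ∑ i, f i * p i := by
    rw [show (k : ℂ) ^ 2 = ((k ^ 2 : ℝ) : ℂ) by push_cast; rfl, hL.mul_inv_sq_add_smul_one hk2,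
      star_dotProduct_conjStarAlgAut_diagonal_mulVec] at hθ'
    exact_mod_cast hθ'
  have hp1 : ∑ i, p i = 1 := (sum_normSq_star_unitary_mulVec U v).trans hv
  have hspec (i) : (hL.eigenvalues i : ℂ) ∈ spectrum ℂ L := by
    simpa using spectrum.algebraMap_mem ℂ (hL.eigenvalues_mem_spectrum_real i)
  obtain ⟨hl₁, hl₂⟩ := sum_mul_mem_Icc_of_sum_eq_one (d := Sum.elim ld ld)
    (fun i ↦ Complex.normSq_nonneg (v i)) hv (by rintro (j | j) <;> exact ⟨hmin j, hmax j⟩)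
  obtain ⟨hf₁, hf₂⟩ := sum_mul_mem_Icc_of_sum_eq_one (p := p) (d := f)
    (fun i ↦ Complex.normSq_nonneg _) hp1
    fun i ↦ div_sq_add_mem_Icc hk2.le hlp hlm (hp _ (hspec i)) (hm _ (hspec i))
  rw [div_eq_mul_inv, div_eq_mul_inv]
  refine ⟨⟨?_, ?_⟩, fun h ↦ ?_⟩ <;> linarith
end

section
/- Let F be a Laplacian eigenfunction with eigenvalue zero on a metric graph with edge lengths l_1,…,l_E, so each component is affine: f_j(x) = α_j + β_j x. Then F satisfies the boundary conditions AF_bv + BF'_bv = 0 if and only if the vector v = C_-(𝒍;k)(α, β)^T is fixed by S(k)C(𝒍;k), i.e. S(k)C(𝒍;k)v = v, for one (equivalently any) real k ≠ 0; moreover the multiplicity of the eigenvalue 1 of S(k)C(𝒍;k) equals the dimension of the zero eigenspace of the Laplacian. -/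
open Matrix

/-- The edge S-matrix associated with boundary condition matrices A, B. -/
noncomputable def SAB {n : Type*} [Fintype n] [DecidableEq n]
    (A B : Matrix n n ℂ) (k : ℂ) : Matrix n n ℂ :=
  -((A + (Complex.I * k) • B)⁻¹ * (A - (Complex.I * k) • B))

/-- C₊(𝒍;k), the block matrix (1, (i/k)1; 1, -(i/k)1 + D₁(𝒍)). -/
noncomputable def Cplus {E : ℕ} (l : Fin E → ℝ) (k : ℂ) :
    Matrix (Fin E ⊕ Fin E) (Fin E ⊕ Fin E) ℂ :=
  Matrix.fromBlocks 1 ((Complex.I / k) • 1) 1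
    (-(Complex.I / k) • 1 + Matrix.diagonal fun j => (l j : ℂ))

/-- C₋(𝒍;k), the block matrix (1, -(i/k)1; 1, (i/k)1 + D₁(𝒍)). -/
noncomputable def Cminus {E : ℕ} (l : Fin E → ℝ) (k : ℂ) :
    Matrix (Fin E ⊕ Fin E) (Fin E ⊕ Fin E) ℂ :=
  Matrix.fromBlocks 1 (-(Complex.I / k) • 1) 1
    ((Complex.I / k) • 1 + Matrix.diagonal fun j => (l j : ℂ))

/-- C(𝒍;k) := C₊(𝒍;k) C₋(𝒍;k)⁻¹. -/
noncomputable def Cmat {E : ℕ} (l : Fin E → ℝ) (k : ℂ) :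
    Matrix (Fin E ⊕ Fin E) (Fin E ⊕ Fin E) ℂ :=
  Cplus l k * (Cminus l k)⁻¹

/-!
Write `P` and `Q` for the matrices sending `(α, β)` to `F_bv` and `F'_bv`. Then
`C_± = P ± (i/k) Q`, hence `(A - ikB) C_+ + (A + ikB) C_- = 2 (A P + B Q)`. Since
`S = -(A + ikB)⁻¹ (A - ikB)`, this says `(A + ikB) (S C C_- - C_-) = -2 (A P + B Q)`, and as
`A + ikB` is invertible, `C_- w` is fixed by `S C` exactly when `w = (α, β)` satisfies the
boundary conditions. Finally `det C_- = ∏ j, (2i/k + l_j) ≠ 0`, so `C_-` maps the zero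
eigenspace of the Laplacian isomorphically onto the fixed space of `S C`.
-/

theorem Matrix.vecMul_injective_of_rank_eq_card {K m n : Type*} [Field K] [Fintype m]
    [Fintype n] {M : Matrix m n K} (h : M.rank = Fintype.card m) : Function.Injective M.vecMul :=
  vecMul_injective_iff.mpr <| linearIndependent_iff_card_eq_finrank_span.mpr <| by
    rw [← h, rank_eq_finrank_span_row, Set.finrank]

open scoped ComplexOrder in
theorem Matrix.isUnit_add_smul_of_rank_fromCols {n : Type*} [Fintype n] [DecidableEq n]
    {A B : Matrix n n ℂ} (hrank : (fromCols A B).rank = Fintype.card n)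
    (hAB : (A * Bᴴ).IsHermitian) {z : ℂ} (hz : z.im ≠ 0) : IsUnit (A + z • B) := by
  suffices h : ∀ x, x ᵥ* (A + z • B) = 0 → x = 0 by
    refine vecMul_injective_iff_isUnit.mp fun x y hxy => sub_eq_zero.mp (h _ ?_)
    exact (sub_vecMul _ _ _).trans (sub_eq_zero.mpr hxy)
  intro x hx
  have hA : x ᵥ* A = -z • (x ᵥ* B) := by
    rw [vecMul_add, vecMul_smul] at hx
    rw [neg_smul]
    exact eq_neg_of_add_eq_zero_left hx
  -- `x (A Bᴴ) xᴴ` is real, but it equals `-z ‖x B‖²` with `z` not real.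
  have hq : star (star x) ⬝ᵥ (A * Bᴴ) *ᵥ star x = -z * (star (x ᵥ* B) ⬝ᵥ x ᵥ* B) := by
    rw [star_star, ← mulVec_mulVec, dotProduct_mulVec, ← star_vecMul, hA, smul_dotProduct,
      smul_eq_mul, dotProduct_comm]
  have hB : x ᵥ* B = 0 := by
    have hreal : (star (x ᵥ* B) ⬝ᵥ x ᵥ* B).im = 0 := by
      rw [← Complex.conj_eq_iff_im]
      exact (star_dotProduct _ _).symm
    have him := hAB.im_star_dotProduct_mulVec_self (star x)
    rw [hq] at him
    have hre : (star (x ᵥ* B) ⬝ᵥ x ᵥ* B).re = 0 := by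
      simpa [Complex.mul_im, hreal, hz] using him
    exact dotProduct_star_self_eq_zero.mp (Complex.ext hre hreal)
  refine vecMul_injective_of_rank_eq_card hrank (a₂ := 0) ?_
  show x ᵥ* fromCols A B = 0 ᵥ* fromCols A B
  rw [vecMul_fromCols, vecMul_fromCols, hA, hB, smul_zero, zero_vecMul, zero_vecMul]

theorem Matrix.finrank_eigenspace_one_eq_finrank_ker {K n : Type*} [Field K] [Fintype n]
    [DecidableEq n] {T C N : Matrix n n K} (hC : IsUnit C)
    (h : ∀ w, T *ᵥ (C *ᵥ w) = C *ᵥ w ↔ N *ᵥ w = 0) :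
    Module.finrank K (Module.End.eigenspace T.mulVecLin 1) =
      Module.finrank K (LinearMap.ker N.mulVecLin) := by
  have heig : Module.End.eigenspace T.mulVecLin 1 =
      (LinearMap.ker N.mulVecLin).map C.mulVecLin := by
    ext v
    simp only [Module.End.mem_eigenspace_iff, one_smul, Submodule.mem_map, LinearMap.mem_ker,
      mulVecLin_apply]
    constructor
    · intro hv
      obtain ⟨w, rfl⟩ := mulVec_surjective_iff_isUnit.mpr hC v
      exact ⟨w, (h w).mp hv, rfl⟩
    · rintro ⟨w, hw, rfl⟩
      exact (h w).mpr hw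
  rw [heig]
  exact (LinearEquiv.finrank_eq
    (Submodule.equivMapOfInjective _ (mulVec_injective_iff_isUnit.mpr hC) _)).symm

/-- `(α, β) ↦ F_bv` for the affine edge functions `f_j(x) = α_j + β_j x`. -/
def affineBoundaryValues {E : ℕ} (l : Fin E → ℝ) :
    Matrix (Fin E ⊕ Fin E) (Fin E ⊕ Fin E) ℂ :=
  fromBlocks 1 0 1 (diagonal fun j => (l j : ℂ))

/-- `(α, β) ↦ F'_bv` for the affine edge functions `f_j(x) = α_j + β_j x`. -/
def affineBoundaryDerivs (E : ℕ) : Matrix (Fin E ⊕ Fin E) (Fin E ⊕ Fin E) ℂ :=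
  fromBlocks 0 1 0 (-1)

theorem affineBoundaryValues_mulVec {E : ℕ} (l : Fin E → ℝ) (α β : Fin E → ℂ) :
    affineBoundaryValues l *ᵥ Sum.elim α β = Sum.elim α fun j => α j + β j * l j := by
  ext (j | j) <;> simp [affineBoundaryValues, fromBlocks_mulVec, mulVec_diagonal, mul_comm]

theorem affineBoundaryDerivs_mulVec {E : ℕ} (α β : Fin E → ℂ) :
    affineBoundaryDerivs E *ᵥ Sum.elim α β = Sum.elim β fun j => -β j := by
  ext (j | j) <;> simp [affineBoundaryDerivs, fromBlocks_mulVec, neg_mulVec]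

section BoundaryMatrices

variable {E : ℕ} (A B : Matrix (Fin E ⊕ Fin E) (Fin E ⊕ Fin E) ℂ) (l : Fin E → ℝ) {k : ℂ}

theorem cplus_eq :
    Cplus l k = affineBoundaryValues l + (Complex.I / k) • affineBoundaryDerivs E := by
  simp [Cplus, affineBoundaryValues, affineBoundaryDerivs, fromBlocks_smul, fromBlocks_add,
    add_comm]

theorem cminus_eq :
    Cminus l k = affineBoundaryValues l - (Complex.I / k) • affineBoundaryDerivs E := by
  simp [Cminus, affineBoundaryValues, affineBoundaryDerivs, fromBlocks_smul, sub_eq_add_neg,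
    fromBlocks_neg, fromBlocks_add, add_comm]

theorem det_cminus : (Cminus l k).det = ∏ j, (2 * (Complex.I / k) + l j) := by
  rw [Cminus, det_fromBlocks_one₁₁, Matrix.one_mul, smul_one_eq_diagonal, smul_one_eq_diagonal,
    diagonal_add, diagonal_sub, det_diagonal]
  congr! 1 with j
  ring

theorem isUnit_det_cminus {k : ℝ} (hk : k ≠ 0) : IsUnit (Cminus l k).det := by
  rw [det_cminus, isUnit_iff_ne_zero, Finset.prod_ne_zero_iff]
  intro j _ h
  have := congrArg Complex.im h
  simp [hk] at this

theorem cmat_mul_cminus (h : IsUnit (Cminus l k).det) : Cmat l k * Cminus l k = Cplus l k := by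
  rw [Cmat, Matrix.mul_assoc, nonsing_inv_mul _ h, Matrix.mul_one]

theorem sub_mul_cplus_add_add_mul_cminus (hk : k ≠ 0) :
    (A - (Complex.I * k) • B) * Cplus l k + (A + (Complex.I * k) • B) * Cminus l k =
      (2 : ℂ) • (A * affineBoundaryValues l + B * affineBoundaryDerivs E) := by
  rw [cplus_eq, cminus_eq]
  simp only [Matrix.mul_add, Matrix.mul_sub, Matrix.sub_mul, Matrix.add_mul, Matrix.smul_mul,
    Matrix.mul_smul]
  match_scalars <;> field_simp <;> norm_num

theorem add_smul_mul_sab_mul_cmat_mul_cminus_sub (hk : k ≠ 0)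
    (hU : IsUnit (A + (Complex.I * k) • B)) (hC : IsUnit (Cminus l k).det) :
    (A + (Complex.I * k) • B) * (SAB A B k * Cmat l k * Cminus l k - Cminus l k) =
      (-2 : ℂ) • (A * affineBoundaryValues l + B * affineBoundaryDerivs E) := by
  have hS : (A + (Complex.I * k) • B) * SAB A B k = -(A - (Complex.I * k) • B) := by
    rw [SAB, Matrix.mul_neg, ← Matrix.mul_assoc,
      mul_nonsing_inv _ ((isUnit_iff_isUnit_det _).mp hU), Matrix.one_mul]
  rw [Matrix.mul_sub, Matrix.mul_assoc, ← Matrix.mul_assoc, hS, cmat_mul_cminus l hC, neg_smul,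
    ← sub_mul_cplus_add_add_mul_cminus A B l hk, Matrix.neg_mul]
  abel

theorem sab_mul_cmat_mulVec_cminus_eq_iff (hk : k ≠ 0)
    (hU : IsUnit (A + (Complex.I * k) • B)) (hC : IsUnit (Cminus l k).det)
    (w : Fin E ⊕ Fin E → ℂ) :
    (SAB A B k * Cmat l k) *ᵥ (Cminus l k *ᵥ w) = Cminus l k *ᵥ w ↔
      (A * affineBoundaryValues l + B * affineBoundaryDerivs E) *ᵥ w = 0 := by
  rw [mulVec_mulVec, ← sub_eq_zero, ← sub_mulVec,
    ← (mulVec_injective_iff_isUnit.mpr hU).eq_iff, mulVec_zero, mulVec_mulVec,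
    add_smul_mul_sab_mul_cmat_mul_cminus_sub A B l hk hU hC, smul_mulVec, smul_eq_zero]
  norm_num

end BoundaryMatrices

theorem stmt_18_general (E : ℕ) (A B : Matrix (Fin E ⊕ Fin E) (Fin E ⊕ Fin E) ℂ)
    (hrank : (Matrix.fromCols A B).rank = Fintype.card (Fin E ⊕ Fin E))
    (hsa : (A * Bᴴ).IsHermitian)
    (l : Fin E → ℝ)
    (k : ℝ) (hk : k ≠ 0) :
    (∀ α β : Fin E → ℂ,
      A *ᵥ (Sum.elim α fun j => α j + β j * (l j : ℂ))
        + B *ᵥ (Sum.elim β fun j => -β j) = 0 ↔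
      (SAB A B (k : ℂ) * Cmat l (k : ℂ)) *ᵥ (Cminus l (k : ℂ) *ᵥ Sum.elim α β)
        = Cminus l (k : ℂ) *ᵥ Sum.elim α β) ∧
    Module.finrank ℂ
        (Module.End.eigenspace (SAB A B (k : ℂ) * Cmat l (k : ℂ)).mulVecLin 1) =
      Module.finrank ℂ
        (LinearMap.ker ((A * Matrix.fromBlocks 1 0 1 (Matrix.diagonal fun j => (l j : ℂ))
          + B * Matrix.fromBlocks 0 1 0 (-1)).mulVecLin)) := by
  have hU : IsUnit (A + (Complex.I * k) • B) :=
    isUnit_add_smul_of_rank_fromCols hrank hsa (by simpa using hk)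
  have hC := isUnit_det_cminus l hk
  have hfix := sab_mul_cmat_mulVec_cminus_eq_iff A B l (Complex.ofReal_ne_zero.mpr hk) hU hC
  refine ⟨fun α β => ?_,
    finrank_eigenspace_one_eq_finrank_ker ((isUnit_iff_isUnit_det _).mpr hC) hfix⟩
  rw [hfix, add_mulVec, ← mulVec_mulVec, ← mulVec_mulVec, affineBoundaryValues_mulVec,
    affineBoundaryDerivs_mulVec]

/-- an affine function F (components f_j(x) = α_j + β_j x) satisfies the
boundary conditions A F_bv + B F'_bv = 0 iff v = C₋(𝒍;k)(α,β)ᵀ is fixed by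
S(k)C(𝒍;k), for any real k ≠ 0; moreover the multiplicity of the eigenvalue 1 of
S(k)C(𝒍;k) equals the dimension of the zero eigenspace of the Laplacian (the space
of pairs (α,β) satisfying the boundary conditions). -/
theorem stmt_18 (E : ℕ) (A B : Matrix (Fin E ⊕ Fin E) (Fin E ⊕ Fin E) ℂ)
    (hrank : (Matrix.fromCols A B).rank = Fintype.card (Fin E ⊕ Fin E))
    (hsa : (A * Bᴴ).IsHermitian)
    (l : Fin E → ℝ) (hl : ∀ j, 0 < l j)
    (k : ℝ) (hk : k ≠ 0) :
    (∀ α β : Fin E → ℂ,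
      A *ᵥ (Sum.elim α fun j => α j + β j * (l j : ℂ))
        + B *ᵥ (Sum.elim β fun j => -β j) = 0 ↔
      (SAB A B (k : ℂ) * Cmat l (k : ℂ)) *ᵥ (Cminus l (k : ℂ) *ᵥ Sum.elim α β)
        = Cminus l (k : ℂ) *ᵥ Sum.elim α β) ∧
    Module.finrank ℂ
        (Module.End.eigenspace (SAB A B (k : ℂ) * Cmat l (k : ℂ)).mulVecLin 1) =
      Module.finrank ℂ
        (LinearMap.ker ((A * Matrix.fromBlocks 1 0 1 (Matrix.diagonal fun j => (l j : ℂ))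
          + B * Matrix.fromBlocks 0 1 0 (-1)).mulVecLin)) :=
  stmt_18_general E A B hrank hsa l k hk
end

section
/- Define l(κ) := (1/κ) log(2E) + (2/κ) artanh(κ/λ⁺_min) for 0 < κ < λ⁺_min, where E ≥ 1 and 0 < λ⁺_min ≤ ∞. Then l attains a unique minimum at some σ ∈ (0, λ⁺_min), and the minimal value satisfies l(σ) ≥ (2 + log(2E))/λ⁺_min; in particular l(σ) > 2/λ⁺_min. -/
/-!
Rescaling `κ = t λ⁺_min` turns `l` into `ell c t / λ⁺_min` with `ell c t = (c + 2 artanh t) / t` on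
`(0, 1)` and `c = log (2E) > 0`. Since `c / t → ∞` as `t → 0⁺` and `artanh t → ∞` as `t → 1⁻`, the
continuous function `ell c` attains its infimum. Its derivative is `φ(t) / t²` with
`φ(t) = 2t / (1 - t²) - c - 2 artanh t`, and `φ' = 4t² / (1 - t²)² > 0`, so `φ` is injective and
every minimiser, being a zero of `φ`, is the same point. Finally `artanh t > t` gives
`ell c t > c + 2`.
-/

/-- The inverse hyperbolic tangent, artanh x = (1/2) log((1+x)/(1-x)). -/
noncomputable def artanh (x : ℝ) : ℝ := (1/2) * Real.log ((1 + x) / (1 - x))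

open Set Filter Topology

lemma artanh_eq_log_sub_log_div_two {x : ℝ} (hx : x ∈ Ioo (-1 : ℝ) 1) :
    artanh x = (Real.log (1 + x) - Real.log (1 - x)) / 2 := by
  rw [artanh, Real.log_div (by linarith [hx.1]) (by linarith [hx.2])]
  ring

lemma hasDerivAt_artanh {x : ℝ} (hx : x ∈ Ioo (-1 : ℝ) 1) :
    HasDerivAt artanh (1 - x ^ 2)⁻¹ x := by
  have hp : 1 + x ≠ 0 := by linarith [hx.1]
  have hm : 1 - x ≠ 0 := by linarith [hx.2]
  have hsq : 1 - x ^ 2 ≠ 0 := by rw [show 1 - x ^ 2 = (1 + x) * (1 - x) by ring]; exact mul_ne_zero hp hm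
  have h := ((((hasDerivAt_id' x).const_add 1).log hp).sub
    (((hasDerivAt_id' x).const_sub 1).log hm)).div_const 2
  refine (h.congr_of_eventuallyEq ?_).congr_deriv ?_
  · filter_upwards [Ioo_mem_nhds hx.1 hx.2] with y hy using artanh_eq_log_sub_log_div_two hy
  · field_simp
    ring

lemma lt_artanh {t : ℝ} (ht : t ∈ Ioo (0 : ℝ) 1) : t < artanh t := by
  have hs := Real.hasSum_log_sub_log_of_abs_lt_one (abs_lt.2 ⟨by linarith [ht.1], ht.2⟩)
  have h := sum_le_hasSum (Finset.range 2) (fun k _ => by have := ht.1; positivity) hs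
  rw [artanh_eq_log_sub_log_div_two ⟨by linarith [ht.1], ht.2⟩]
  norm_num [Finset.sum_range_succ] at h
  nlinarith [pow_pos ht.1 3]

lemma tendsto_artanh_nhdsLT_one : Tendsto artanh (𝓝[<] 1) atTop := by
  have h1 : Tendsto (fun x : ℝ => 1 - x) (𝓝[<] 1) (𝓝[>] 0) := tendsto_nhdsWithin_iff.2
    ⟨by simpa using ((continuous_sub_left (1 : ℝ)).tendsto 1).mono_left nhdsWithin_le_nhds,
      eventually_nhdsWithin_of_forall fun x hx => sub_pos.2 (mem_Iio.1 hx)⟩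
  have h2 : Tendsto (fun x => -Real.log (1 - x) / 2) (𝓝[<] 1) atTop :=
    (tendsto_neg_atBot_atTop.comp (Real.tendsto_log_nhdsGT_zero.comp h1)).atTop_div_const two_pos
  refine tendsto_atTop_mono' _ ?_ h2
  filter_upwards [Ioo_mem_nhdsLT (show (0:ℝ) < 1 by norm_num)] with x hx
  rw [artanh_eq_log_sub_log_div_two ⟨by linarith [hx.1], hx.2⟩]
  have := Real.log_nonneg (by linarith [hx.1] : (1:ℝ) ≤ 1 + x)
  linarith

theorem ContinuousOn.exists_isMinOn_Ioo {α β : Type*} [ConditionallyCompleteLinearOrder α]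
    [TopologicalSpace α] [OrderTopology α] [DenselyOrdered α] [LinearOrder β]
    [TopologicalSpace β] [ClosedIicTopology β] [NoMaxOrder β] {f : α → β} {a b : α} (hab : a < b)
    (hf : ContinuousOn f (Ioo a b)) (ha : Tendsto f (𝓝[>] a) atTop)
    (hb : Tendsto f (𝓝[<] b) atTop) : ∃ x ∈ Ioo a b, IsMinOn f (Ioo a b) x := by
  obtain ⟨m, hm⟩ := nonempty_Ioo.2 hab
  obtain ⟨u, hu, hfu⟩ := (mem_nhdsGT_iff_exists_mem_Ioc_Ioo_subset hm.1).1 (ha.eventually_gt_atTop (f m))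
  obtain ⟨v, hv, hfv⟩ := (mem_nhdsLT_iff_exists_mem_Ico_Ioo_subset hm.2).1 (hb.eventually_gt_atTop (f m))
  have hK : Icc u v ⊆ Ioo a b := Icc_subset_Ioo hu.1 hv.2
  obtain ⟨x, hxK, hx⟩ := isCompact_Icc.exists_isMinOn ⟨m, hu.2, hv.1⟩ (hf.mono hK)
  have hxm : f x ≤ f m := hx ⟨hu.2, hv.1⟩
  refine ⟨x, hK hxK, fun y hy => ?_⟩
  rcases lt_or_ge y u with hyu | hyu
  · exact hxm.trans (hfu ⟨hy.1, hyu⟩).le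
  rcases le_or_gt y v with hyv | hyv
  · exact hx ⟨hyu, hyv⟩
  · exact hxm.trans (hfv ⟨hyv, hy.2⟩).le

/-- With `c = log (2E)` and `κ = t λ⁺_min`, `l(κ) = ell c t / λ⁺_min`. -/
noncomputable def ell (c t : ℝ) : ℝ := (c + 2 * artanh t) / t

noncomputable def ellDerivNum (c t : ℝ) : ℝ := 2 * t / (1 - t ^ 2) - c - 2 * artanh t

section ell

variable {c t : ℝ}

lemma hasDerivAt_ell (c : ℝ) (ht : t ∈ Ioo (0 : ℝ) 1) :
    HasDerivAt (ell c) (ellDerivNum c t / t ^ 2) t := by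
  have hsq : 1 - t ^ 2 ≠ 0 := by nlinarith [ht.1, ht.2]
  have h := (((hasDerivAt_artanh ⟨by linarith [ht.1], ht.2⟩).const_mul 2).const_add c).div
    (hasDerivAt_id' t) ht.1.ne'
  refine h.congr_deriv ?_
  rw [ellDerivNum]
  field_simp
  ring

lemma hasDerivAt_ellDerivNum (c : ℝ) (ht : t ∈ Ioo (-1 : ℝ) 1) :
    HasDerivAt (ellDerivNum c) (4 * t ^ 2 / (1 - t ^ 2) ^ 2) t := by
  have hsq : 1 - t ^ 2 ≠ 0 := by nlinarith [ht.1, ht.2]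
  have h := ((((hasDerivAt_id' t).const_mul 2).div ((hasDerivAt_pow 2 t).const_sub 1) hsq).sub_const
    c).sub ((hasDerivAt_artanh ht).const_mul 2)
  refine h.congr_deriv ?_
  field_simp
  ring

lemma strictMonoOn_ellDerivNum (c : ℝ) : StrictMonoOn (ellDerivNum c) (Ioo 0 1) := by
  have hderiv : ∀ t ∈ Ioo (0 : ℝ) 1, HasDerivAt (ellDerivNum c) (4 * t ^ 2 / (1 - t ^ 2) ^ 2) t :=
    fun t ht => hasDerivAt_ellDerivNum c ⟨by linarith [ht.1], ht.2⟩
  refine strictMonoOn_of_deriv_pos (convex_Ioo 0 1)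
    (fun t ht => (hderiv t ht).continuousAt.continuousWithinAt) fun t ht => ?_
  rw [interior_Ioo] at ht
  rw [(hderiv t ht).deriv]
  have : 1 - t ^ 2 ≠ 0 := by nlinarith [ht.1, ht.2]
  have := ht.1
  positivity

lemma add_two_lt_ell (hc : 0 ≤ c) (ht : t ∈ Ioo (0 : ℝ) 1) : c + 2 < ell c t := by
  rw [ell, lt_div_iff₀ ht.1]
  nlinarith [lt_artanh ht, ht.1, ht.2]

lemma tendsto_ell_nhdsGT_zero (hc : 0 < c) : Tendsto (ell c) (𝓝[>] 0) atTop := by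
  refine tendsto_atTop_mono' _ ?_ (tendsto_inv_nhdsGT_zero.const_mul_atTop hc)
  filter_upwards [Ioo_mem_nhdsGT (show (0 : ℝ) < 1 by norm_num)] with t ht
  rw [ell, ← div_eq_mul_inv]
  exact div_le_div_of_nonneg_right (by linarith [lt_artanh ht, ht.1]) ht.1.le

lemma tendsto_ell_nhdsLT_one (hc : 0 ≤ c) : Tendsto (ell c) (𝓝[<] 1) atTop := by
  refine tendsto_atTop_mono' _ ?_ (tendsto_artanh_nhdsLT_one.const_mul_atTop two_pos)
  filter_upwards [Ioo_mem_nhdsLT (show (0 : ℝ) < 1 by norm_num)] with t ht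
  rw [ell, le_div_iff₀ ht.1]
  nlinarith [lt_artanh ht, ht.1, ht.2]

lemma ellDerivNum_eq_zero_of_isMinOn (h : IsMinOn (ell c) (Ioo 0 1) t) (ht : t ∈ Ioo (0 : ℝ) 1) :
    ellDerivNum c t = 0 := by
  have := (h.isLocalMin (Ioo_mem_nhds ht.1 ht.2)).hasDerivAt_eq_zero (hasDerivAt_ell c ht)
  simpa [ht.1.ne'] using this

lemma eq_of_ell_eq_of_isMinOn {τ : ℝ} (hmin : IsMinOn (ell c) (Ioo 0 1) τ)
    (hτ : τ ∈ Ioo (0 : ℝ) 1) (ht : t ∈ Ioo (0 : ℝ) 1) (h : ell c t = ell c τ) : t = τ := by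
  have hmin' : IsMinOn (ell c) (Ioo 0 1) t := fun s hs => h ▸ hmin hs
  refine (strictMonoOn_ellDerivNum c).injOn ht hτ ?_
  rw [ellDerivNum_eq_zero_of_isMinOn hmin' ht, ellDerivNum_eq_zero_of_isMinOn hmin hτ]

lemma exists_isMinOn_ell (hc : 0 < c) : ∃ τ ∈ Ioo (0 : ℝ) 1, IsMinOn (ell c) (Ioo 0 1) τ :=
  ContinuousOn.exists_isMinOn_Ioo one_pos
    (fun _ ht => (hasDerivAt_ell c ht).continuousAt.continuousWithinAt)
    (tendsto_ell_nhdsGT_zero hc) (tendsto_ell_nhdsLT_one hc.le)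

end ell

lemma div_mul_add_div_mul_artanh_eq_ell_div {c lp κ : ℝ} (hlp : 0 < lp) (hκ : 0 < κ) :
    (1 / κ) * c + (2 / κ) * artanh (κ / lp) = ell c (κ / lp) / lp := by
  rw [ell]
  field_simp

/-- the function l(κ) = (1/κ)log(2E) + (2/κ)artanh(κ/λ⁺_min) on
(0, λ⁺_min) attains a unique minimum at some σ ∈ (0, λ⁺_min), and the minimal
value satisfies l(σ) ≥ (2 + log(2E))/λ⁺_min > 2/λ⁺_min. -/
theorem stmt_19 (E : ℕ) (hE : 1 ≤ E) (lp : ℝ) (hlp : 0 < lp) :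
    ∃ σ ∈ Set.Ioo (0 : ℝ) lp,
      (∀ κ ∈ Set.Ioo (0 : ℝ) lp,
        (1/σ) * Real.log (2*E) + (2/σ) * artanh (σ/lp) ≤
          (1/κ) * Real.log (2*E) + (2/κ) * artanh (κ/lp)) ∧
      (∀ κ ∈ Set.Ioo (0 : ℝ) lp,
        (1/κ) * Real.log (2*E) + (2/κ) * artanh (κ/lp) =
          (1/σ) * Real.log (2*E) + (2/σ) * artanh (σ/lp) → κ = σ) ∧
      (2 + Real.log (2*E)) / lp ≤ (1/σ) * Real.log (2*E) + (2/σ) * artanh (σ/lp) ∧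
      2 / lp < (1/σ) * Real.log (2*E) + (2/σ) * artanh (σ/lp) := by
  set c := Real.log (2 * E)
  have hc : 0 < c := Real.log_pos (by norm_cast; omega)
  obtain ⟨τ, hτ, hmin⟩ := exists_isMinOn_ell hc
  have hscale : ∀ κ ∈ Ioo 0 lp, κ / lp ∈ Ioo (0 : ℝ) 1 := fun κ hκ =>
    ⟨div_pos hκ.1 hlp, (div_lt_one hlp).2 hκ.2⟩
  have hσ : lp * τ ∈ Ioo 0 lp := ⟨mul_pos hlp hτ.1, mul_lt_of_lt_one_right hlp hτ.2⟩
  have hlσ : (1 / (lp * τ)) * c + (2 / (lp * τ)) * artanh (lp * τ / lp) = ell c τ / lp := by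
    rw [div_mul_add_div_mul_artanh_eq_ell_div hlp hσ.1, mul_div_cancel_left₀ _ hlp.ne']
  refine ⟨lp * τ, hσ, fun κ hκ => ?_, fun κ hκ heq => ?_, ?_, ?_⟩
  · rw [hlσ, div_mul_add_div_mul_artanh_eq_ell_div hlp hκ.1]
    exact div_le_div_of_nonneg_right (hmin (hscale κ hκ)) hlp.le
  · rw [hlσ, div_mul_add_div_mul_artanh_eq_ell_div hlp hκ.1, div_left_inj' hlp.ne'] at heq
    rw [← eq_of_ell_eq_of_isMinOn hmin hτ (hscale κ hκ) heq, mul_div_cancel₀ _ hlp.ne']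
  · rw [hlσ]
    exact div_le_div_of_nonneg_right (by linarith [add_two_lt_ell hc.le hτ]) hlp.le
  · rw [hlσ]
    exact div_lt_div_of_pos_right (by linarith [add_two_lt_ell hc.le hτ]) hlp
end
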